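/- arXiv:0811.4209 — 4 statements merged into one kernel-verified Lean document; each statement's English description precedes it below -/
import Mathlib

section
/- Let A, B, C be real numbers with 0 ≤ A, B, C < 1, A ≥ BC, B ≥ CA, and C ≥ AB. Then either for all w on the unit circle |1 + A·w| > |B·w + C|, or for all w on the unit circle |1 + B·w| > |A·w + C| (at least one of the two uniform strict inequalities holds). -/
/-!
On the unit circle, `|1 + A w|² - |B w + C|²` is affine in `Re w` with slope `2 (A - B C) ≥ 0`,
so it is smallest at `w = -1`, where it equals `(1 - A)² - (B - C)²`. Hence the first inequality
holds as soon as `|B - C| < 1 - A`, and symmetrically the second one as soon as `|A - C| < 1 - B`.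
If `B ≤ A`, then `C ≥ A B` gives `A - C ≤ A (1 - B) < 1 - B` and `C < 1` gives `C - A < 1 - B`;
the case `A ≤ B` is symmetric.
-/

open Complex

lemma normSq_one_add_mul_sub_normSq_mul_add {w : ℂ} (hw : ‖w‖ = 1) (a b c : ℝ) :
    normSq (1 + a * w) - normSq (b * w + c) =
      (1 - a) ^ 2 - (b - c) ^ 2 + 2 * (a - b * c) * (1 + w.re) := by
  have hw2 : normSq w = 1 := by rw [← Complex.sq_norm, hw, one_pow]
  rw [normSq_apply] at hw2
  simp only [normSq_apply, add_re, add_im, mul_re, mul_im, ofReal_re, ofReal_im, one_re, one_im]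
  linear_combination (a ^ 2 - b ^ 2) * hw2

lemma norm_mul_add_lt_norm_one_add_mul {a b c : ℝ} (hbc : b * c ≤ a) (h : |b - c| < 1 - a)
    {w : ℂ} (hw : ‖w‖ = 1) : ‖(b : ℂ) * w + c‖ < ‖1 + (a : ℂ) * w‖ := by
  have hre : 0 ≤ 1 + w.re := by
    linarith [neg_abs_le w.re, hw ▸ abs_re_le_norm w]
  have hmin : (b - c) ^ 2 < (1 - a) ^ 2 := sq_lt_sq' (abs_lt.mp h).1 (abs_lt.mp h).2
  have hsq : normSq ((b : ℂ) * w + c) < normSq (1 + (a : ℂ) * w) := by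
    have := normSq_one_add_mul_sub_normSq_mul_add hw a b c
    nlinarith [mul_nonneg (sub_nonneg.mpr hbc) hre]
  rw [← Complex.sq_norm, ← Complex.sq_norm] at hsq
  exact lt_of_pow_lt_pow_left₀ 2 (norm_nonneg _) hsq

lemma abs_sub_lt_one_sub_of_le {a b c : ℝ} (ha : a < 1) (hb : b < 1) (hc : c < 1) (hba : b ≤ a)
    (habc : a * b ≤ c) : |a - c| < 1 - b :=
  abs_lt.mpr ⟨by linarith, by nlinarith [mul_pos (sub_pos.mpr ha) (sub_pos.mpr hb)]⟩

theorem stmt_1_general (A B C : ℝ)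
    (hA1 : A < 1) (hB1 : B < 1)
    (hC1 : C < 1)
    (hABC : A ≥ B * C) (hBCA : B ≥ C * A) (hCAB : C ≥ A * B) :
    (∀ w : ℂ, ‖w‖ = 1 →
        ‖(B : ℂ) * w + (C : ℂ)‖ < ‖1 + (A : ℂ) * w‖) ∨
    (∀ w : ℂ, ‖w‖ = 1 →
        ‖(A : ℂ) * w + (C : ℂ)‖ < ‖1 + (B : ℂ) * w‖) := by
  rcases le_total B A with hBA | hAB
  · right
    have h := abs_sub_lt_one_sub_of_le hA1 hB1 hC1 hBA hCAB
    exact fun w hw => norm_mul_add_lt_norm_one_add_mul (by linarith) h hw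
  · left
    have h := abs_sub_lt_one_sub_of_le hB1 hA1 hC1 hAB (by linarith)
    exact fun w hw => norm_mul_add_lt_norm_one_add_mul hABC h hw

theorem stmt_1 (A B C : ℝ)
    (hA0 : 0 ≤ A) (hA1 : A < 1) (hB0 : 0 ≤ B) (hB1 : B < 1)
    (hC0 : 0 ≤ C) (hC1 : C < 1)
    (hABC : A ≥ B * C) (hBCA : B ≥ C * A) (hCAB : C ≥ A * B) :
    (∀ w : ℂ, ‖w‖ = 1 →
        ‖(B : ℂ) * w + (C : ℂ)‖ < ‖1 + (A : ℂ) * w‖) ∨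
    (∀ w : ℂ, ‖w‖ = 1 →
        ‖(A : ℂ) * w + (C : ℂ)‖ < ‖1 + (B : ℂ) * w‖) :=
  stmt_1_general A B C hA1 hB1 hC1 hABC hBCA hCAB
end

section
/- Let N > N' > 0 be integers, λ a complex number with |λ| = 1, ν', ν integers, and A, B, C real numbers with 0 ≤ A, B, C < 1, A ≥ BC, B ≥ CA, C ≥ AB. Then all N roots (counted with multiplicity) of the polynomial P(z) = z^N + Aλ^{ν'}z^{N−N'} + Bλ^{ν−ν'}z^{N'} + Cλ^ν lie strictly inside the open unit disk. -/
/-!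
Write `u = z ^ N' / λ ^ ν'`. Then `P(z) = z ^ (N - N') λ ^ ν' (u + A) + λ ^ ν (B u + C)`, so a root
with `‖z‖ ≥ 1` would give `‖u + A‖ ≤ ‖B u + C‖` with `‖u‖ ≥ 1`. But
`‖u + A‖² - ‖B u + C‖² = (1 - B²)‖u‖² + 2(A - BC) Re u + A² - C²` is bounded below, at `‖u‖ = s`,
by `(1 - B²)s² - 2(A - BC)s + A² - C²`, a quadratic in `s` that equals
`(1 - A - B + C)(1 - A + B - C) > 0` at `s = 1` and is increasing on `s ≥ 1`.
-/

theorem norm_mul_add_lt_norm_add {A B C : ℝ} (hB0 : 0 ≤ B) (hA1 : A < 1) (hB1 : B < 1)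
    (hC1 : C < 1) (hABC : B * C ≤ A) (hBCA : C * A ≤ B) (hCAB : A * B ≤ C)
    {u : ℂ} (hu : 1 ≤ ‖u‖) : ‖(B : ℂ) * u + C‖ < ‖u + A‖ := by
  set s := ‖u‖
  have hre : -s ≤ u.re := neg_le_of_abs_le (Complex.abs_re_le_norm u)
  have hs : s ^ 2 = u.re ^ 2 + u.im ^ 2 := by
    rw [Complex.sq_norm, Complex.normSq_apply]; ring
  have hdiff : ‖u + A‖ ^ 2 - ‖(B : ℂ) * u + C‖ ^ 2
      = (1 - B ^ 2) * s ^ 2 + 2 * (A - B * C) * u.re + A ^ 2 - C ^ 2 := by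
    simp only [Complex.sq_norm, Complex.normSq_apply, Complex.add_re, Complex.add_im,
      Complex.mul_re, Complex.mul_im, Complex.ofReal_re, Complex.ofReal_im]
    rw [hs]; ring
  have hat_one : 0 < (1 - A - B + C) * (1 - A + B - C) := by
    apply mul_pos <;> nlinarith
  have hslope : 0 ≤ (1 - B ^ 2) * (s + 1) - 2 * (A - B * C) := by
    have h1B : 0 ≤ 1 - B ^ 2 := by nlinarith
    nlinarith [mul_le_mul_of_nonneg_left hCAB hB0, mul_nonneg (sub_nonneg.2 hA1.le) h1B,
      mul_nonneg (sub_nonneg.2 hu) h1B]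
  have hquad : 0 < ‖u + A‖ ^ 2 - ‖(B : ℂ) * u + C‖ ^ 2 := by
    rw [hdiff]
    nlinarith [mul_le_mul_of_nonneg_left hre (by nlinarith : 0 ≤ 2 * (A - B * C)),
      mul_nonneg (sub_nonneg.2 hu) hslope]
  exact lt_of_pow_lt_pow_left₀ 2 (norm_nonneg _) (by linarith)

theorem stmt_2_general (N N' : ℕ) (hNN : N' < N)
    (lam : ℂ) (hlam : ‖lam‖ = 1) (ν' ν : ℤ)
    (A B C : ℝ)
    (hA1 : A < 1) (hB0 : 0 ≤ B) (hB1 : B < 1)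
    (hC1 : C < 1)
    (hABC : A ≥ B * C) (hBCA : B ≥ C * A) (hCAB : C ≥ A * B) :
    ∀ z : ℂ,
      z ^ N + (A : ℂ) * lam ^ ν' * z ^ (N - N') + (B : ℂ) * lam ^ (ν - ν') * z ^ N'
        + (C : ℂ) * lam ^ ν = 0 →
      ‖z‖ < 1 := by
  intro z hz
  by_contra! hz1
  have hlam0 : lam ≠ 0 := norm_ne_zero_iff.1 (by rw [hlam]; exact one_ne_zero)
  have hunit (k : ℤ) : ‖lam ^ k‖ = 1 := by rw [norm_zpow, hlam, one_zpow]
  set u := z ^ N' / lam ^ ν'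
  have hfactor : z ^ (N - N') * lam ^ ν' * (u + A) = -(lam ^ ν * (B * u + C)) := by
    have hpow : z ^ (N - N') * z ^ N' = z ^ N := by rw [← pow_add, Nat.sub_add_cancel hNN.le]
    have hlampow : lam ^ ν * (lam ^ ν')⁻¹ = lam ^ (ν - ν') := by
      rw [zpow_sub₀ hlam0, div_eq_mul_inv]
    have hinv : lam ^ ν' * (lam ^ ν')⁻¹ = 1 := mul_inv_cancel₀ (zpow_ne_zero _ hlam0)
    simp only [u, div_eq_mul_inv]
    linear_combination hz + z ^ (N - N') * z ^ N' * hinv + hpow + (B : ℂ) * z ^ N' * hlampow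
  have hu : 1 ≤ ‖u‖ := by
    rw [norm_div, hunit, div_one, norm_pow]; exact one_le_pow₀ hz1
  have hnorms := congrArg norm hfactor
  rw [norm_neg, norm_mul, norm_mul, norm_mul, hunit, hunit, mul_one, one_mul, norm_pow] at hnorms
  have hgrow : ‖u + A‖ ≤ ‖(B : ℂ) * u + C‖ :=
    hnorms ▸ le_mul_of_one_le_left (norm_nonneg _) (one_le_pow₀ hz1)
  exact (norm_mul_add_lt_norm_add hB0 hA1 hB1 hC1 hABC hBCA hCAB hu).not_ge hgrow

theorem stmt_2 (N N' : ℕ) (hN' : 0 < N') (hNN : N' < N)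
    (lam : ℂ) (hlam : ‖lam‖ = 1) (ν' ν : ℤ)
    (A B C : ℝ)
    (hA0 : 0 ≤ A) (hA1 : A < 1) (hB0 : 0 ≤ B) (hB1 : B < 1)
    (hC0 : 0 ≤ C) (hC1 : C < 1)
    (hABC : A ≥ B * C) (hBCA : B ≥ C * A) (hCAB : C ≥ A * B) :
    ∀ z : ℂ,
      z ^ N + (A : ℂ) * lam ^ ν' * z ^ (N - N') + (B : ℂ) * lam ^ (ν - ν') * z ^ N'
        + (C : ℂ) * lam ^ ν = 0 →
      ‖z‖ < 1 :=
  stmt_2_general N N' hNN lam hlam ν' ν A B C hA1 hB0 hB1 hC1 hABC hBCA hCAB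
end

section
/- Let 0 < q₁ < p₁ < q₂ < p₂ < ⋯ < q_M < p_M be real numbers and d₁,…,d_M real numbers with d_i > 1 for all i. Let R be the M×M matrix with entries R_{ij} = r_i δ_{ij} + 1/(p_i − q_j), where r_i is any complex number with |r_i|² = (d_i²/(p_i − q_i)²) ∏_{j≠i} ((q_j − q_i)(p_j − p_i))/((p_j − q_i)(q_j − p_i)). Then R is invertible. -/
/-!
If `R γ = 0` with `γ ≠ 0`, put `ψ(k) = ∑ⱼ γⱼ / (k - q j)`, so that `ψ(p i) = -r i γ i`. The
rational function `φ(k) = ψ(k) ψ̄(k) ∏ⱼ (k - q j) / (k - p j)` is `O(k⁻²)`, so its residues sum to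
zero. Its residue at `p i` is `residueAtPole p q i * ‖r i γ i‖²` and at `q i` it is
`residueAtZero p q i * ‖γ i‖²`; by the formula for `‖r i‖²` their sum is
`(d i² - 1) / (p i - q i) * ∏_{j ≠ i} (q i - q j) / (q i - p j) * ‖γ i‖²`, which interlacing makes
positive as soon as `γ i ≠ 0`. The vanishing of the residue sum is proved algebraically, through the
barycentric form of Lagrange interpolation.
-/

open Finset Polynomial Lagrange Function

section Barycentric

variable {K ι : Type*} [Field K] [DecidableEq ι]

theorem eval_eq_eval_nodal_mul_sum_nodalWeight {s : Finset ι} {v : ι → K} {f : K[X]} {x : K}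
    (hvs : Set.InjOn v s) (hf : f.degree < #s) (hx : ∀ i ∈ s, x ≠ v i) :
    f.eval x = (nodal s v).eval x * ∑ i ∈ s, nodalWeight s v i * (x - v i)⁻¹ * f.eval (v i) := by
  conv_lhs => rw [eq_interpolate hvs hf]
  exact eval_interpolate_not_at_node _ hx

end Barycentric

section Residues

variable {K ι : Type*} [Field K] [Fintype ι] [DecidableEq ι]

/-- Residue of `∏ⱼ (k - Q j) / (k - P j)` at `k = P i`. -/
def residueAtPole (P Q : ι → K) (i : ι) : K :=
  (∏ j, (P i - Q j)) / ∏ j ∈ univ.erase i, (P i - P j)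

/-- Residue of `(k - Q m)⁻² ∏ⱼ (k - Q j) / (k - P j)` at `k = Q m`. -/
def residueAtZero (P Q : ι → K) (m : ι) : K :=
  (∏ j ∈ univ.erase m, (Q m - Q j)) / ∏ j, (Q m - P j)

def cauchySum (Q γ : ι → K) (k : K) : K :=
  ∑ j, γ j / (k - Q j)

variable {P Q : ι → K}

-- Barycentric interpolation of `nodal (univ.erase n) Q` at `Q m` on the nodes `P`.
theorem sum_residueAtPole_div (hP : Injective P) (hPQ : ∀ i j, P i ≠ Q j) (m n : ι) :
    ∑ i, residueAtPole P Q i / ((P i - Q m) * (P i - Q n)) =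
      if m = n then -residueAtZero P Q m else 0 := by
  set f := nodal (univ.erase n) Q
  have hf : f.degree < #(univ : Finset ι) := by
    rw [degree_nodal, card_erase_of_mem (mem_univ n)]
    exact_mod_cast Nat.sub_lt (card_pos.mpr ⟨n, mem_univ n⟩) one_pos
  have hQm : ∀ i ∈ univ, Q m ≠ P i := fun i _ => (hPQ i m).symm
  have hbary := eval_eq_eval_nodal_mul_sum_nodalWeight hP.injOn hf hQm
  have hnodal : (nodal univ P).eval (Q m) ≠ 0 := eval_nodal_not_at_node hQm
  have hterm : ∀ i, residueAtPole P Q i / ((P i - Q m) * (P i - Q n)) =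
      -(nodalWeight univ P i * (Q m - P i)⁻¹ * f.eval (P i)) := by
    intro i
    have hm := sub_ne_zero.mpr (hPQ i m)
    have hn := sub_ne_zero.mpr (hPQ i n)
    have hm' := sub_ne_zero.mpr (hPQ i m).symm
    rw [residueAtPole, nodalWeight, prod_inv_distrib, eval_nodal,
      ← mul_prod_erase univ (fun j => P i - Q j) (mem_univ n)]
    field_simp
    ring
  have hsum : ∑ i, nodalWeight univ P i * (Q m - P i)⁻¹ * f.eval (P i) =
      f.eval (Q m) / (nodal univ P).eval (Q m) := by
    rw [hbary, mul_div_cancel_left₀ _ hnodal]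
  rw [sum_congr rfl fun i _ => hterm i, sum_neg_distrib, hsum]
  split_ifs with hmn
  · subst hmn
    rw [residueAtZero, eval_nodal, eval_nodal]
  · rw [eval_nodal_at_node (mem_erase.mpr ⟨hmn, mem_univ m⟩), zero_div, neg_zero]

theorem sum_residueAtPole_mul_cauchySum_mul_cauchySum (hP : Injective P)
    (hPQ : ∀ i j, P i ≠ Q j) (γ δ : ι → K) :
    ∑ i, residueAtPole P Q i * cauchySum Q γ (P i) * cauchySum Q δ (P i) =
      -∑ m, residueAtZero P Q m * γ m * δ m := by
  calc ∑ i, residueAtPole P Q i * cauchySum Q γ (P i) * cauchySum Q δ (P i)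
      = ∑ n, ∑ m, γ m * δ n * ∑ i, residueAtPole P Q i / ((P i - Q m) * (P i - Q n)) := by
        simp only [cauchySum, mul_sum, sum_mul]
        rw [sum_comm]
        refine sum_congr rfl fun n _ => ?_
        rw [sum_comm]
        refine sum_congr rfl fun m _ => sum_congr rfl fun i _ => ?_
        rw [div_eq_mul_inv _ ((P i - Q m) * _), mul_inv]
        ring
    _ = ∑ n, ∑ m, γ m * δ n * if m = n then -residueAtZero P Q m else 0 := by
        simp only [sum_residueAtPole_div hP hPQ]
    _ = -∑ m, residueAtZero P Q m * γ m * δ m := by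
        simp only [mul_ite, mul_zero, sum_ite_eq', mem_univ, if_true, ← sum_neg_distrib]
        exact sum_congr rfl fun m _ => by ring

theorem mulVec_diagonal_add_cauchy (r γ : ι → K) :
    (Matrix.of fun i j => r i * (if i = j then 1 else 0) + 1 / (P i - Q j)).mulVec γ =
      fun i => r i * γ i + cauchySum Q γ (P i) := by
  ext i
  simp only [Matrix.mulVec, dotProduct, Matrix.of_apply, add_mul, sum_add_distrib, mul_assoc,
    ite_mul, one_mul, zero_mul, mul_ite, mul_zero, sum_ite_eq, mem_univ, if_true, cauchySum,
    one_div_mul_eq_div]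

theorem residueAtPole_mul_add_residueAtZero (hP : Injective P) (hPQ : ∀ i j, P i ≠ Q j)
    (i : ι) (d : K) :
    residueAtPole P Q i * (d ^ 2 / (P i - Q i) ^ 2 *
        ∏ j ∈ univ.erase i, (Q j - Q i) * (P j - P i) / ((P j - Q i) * (Q j - P i))) +
      residueAtZero P Q i =
      (d ^ 2 - 1) / (P i - Q i) * ∏ j ∈ univ.erase i, (Q i - Q j) / (Q i - P j) := by
  have hii := sub_ne_zero.mpr (hPQ i i)
  have hii' := sub_ne_zero.mpr (hPQ i i).symm
  have hfactor : ∀ j ∈ univ.erase i, (P i - Q j) / (P i - P j) *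
      ((Q j - Q i) * (P j - P i) / ((P j - Q i) * (Q j - P i))) = (Q i - Q j) / (Q i - P j) := by
    intro j hj
    have hij := sub_ne_zero.mpr (hP.ne (ne_of_mem_erase hj).symm)
    have h2 := sub_ne_zero.mpr (hPQ i j).symm
    have h3 := sub_ne_zero.mpr (hPQ j i)
    have h4 := sub_ne_zero.mpr (hPQ j i).symm
    field_simp
    ring
  have hprod := prod_congr rfl hfactor
  rw [prod_mul_distrib] at hprod
  have hpole : residueAtPole P Q i =
      (P i - Q i) * ∏ j ∈ univ.erase i, (P i - Q j) / (P i - P j) := by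
    rw [residueAtPole, ← mul_prod_erase univ (fun j => P i - Q j) (mem_univ i), mul_div_assoc,
      prod_div_distrib]
  have hzero : residueAtZero P Q i =
      -(P i - Q i)⁻¹ * ∏ j ∈ univ.erase i, (Q i - Q j) / (Q i - P j) := by
    rw [residueAtZero, ← mul_prod_erase univ (fun j => Q i - P j) (mem_univ i), prod_div_distrib]
    field_simp
    ring
  rw [hpole, hzero, ← hprod]
  field_simp
  ring

end Residues

section Map

variable {K L ι : Type*} [Field K] [Field L] [Fintype ι]

theorem map_cauchySum (f : K →+* L) (Q γ : ι → K) (k : K) :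
    f (cauchySum Q γ k) = cauchySum (f ∘ Q) (f ∘ γ) (f k) := by
  simp only [cauchySum, map_div₀, map_sum, map_sub, comp_apply]

variable [DecidableEq ι]

theorem map_residueAtPole (f : K →+* L) (P Q : ι → K) (i : ι) :
    f (residueAtPole P Q i) = residueAtPole (f ∘ P) (f ∘ Q) i := by
  simp only [residueAtPole, map_div₀, map_prod, map_sub, comp_apply]

theorem map_residueAtZero (f : K →+* L) (P Q : ι → K) (m : ι) :
    f (residueAtZero P Q m) = residueAtZero (f ∘ P) (f ∘ Q) m := by
  simp only [residueAtZero, map_div₀, map_prod, map_sub, comp_apply]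

end Map

open ComplexConjugate in
theorem sum_residue_mul_sq_norm_eq_zero {ι : Type*} [Fintype ι] [DecidableEq ι] {p q : ι → ℝ}
    (hp : Injective p) (hpq : ∀ i j, p i ≠ q j) {r γ : ι → ℂ}
    (hker : ∀ i, r i * γ i + cauchySum (fun j => (q j : ℂ)) γ (p i) = 0) :
    ∑ i, (residueAtPole p q i * ‖r i‖ ^ 2 + residueAtZero p q i) * ‖γ i‖ ^ 2 = 0 := by
  set P : ι → ℂ := fun i => (p i : ℂ)
  set Q : ι → ℂ := fun i => (q i : ℂ)
  have hP : Injective P := Complex.ofReal_injective.comp hp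
  have hPQ : ∀ i j, P i ≠ Q j := fun i j h => hpq i j (Complex.ofReal_injective h)
  have hψ : ∀ i, cauchySum Q γ (P i) = -(r i * γ i) := fun i =>
    eq_neg_of_add_eq_zero_right (hker i)
  have hψconj : ∀ i, cauchySum Q (conj ∘ γ) (P i) = conj (cauchySum Q γ (P i)) := fun i => by
    rw [map_cauchySum]
    simp [P, Q, comp_def]
  have hform := sum_residueAtPole_mul_cauchySum_mul_cauchySum hP hPQ γ (conj ∘ γ)
  have hres : ∀ i, ((residueAtPole p q i : ℝ) : ℂ) = residueAtPole P Q i :=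
    map_residueAtPole Complex.ofRealHom p q
  have hres' : ∀ i, ((residueAtZero p q i : ℝ) : ℂ) = residueAtZero P Q i :=
    map_residueAtZero Complex.ofRealHom p q
  apply Complex.ofReal_injective
  calc ((∑ i, (residueAtPole p q i * ‖r i‖ ^ 2 + residueAtZero p q i) * ‖γ i‖ ^ 2 : ℝ) : ℂ)
      = ∑ i, residueAtPole P Q i * cauchySum Q γ (P i) * cauchySum Q (conj ∘ γ) (P i) +
          ∑ i, residueAtZero P Q i * γ i * (conj ∘ γ) i := by
        rw [← sum_add_distrib]
        push_cast
        refine sum_congr rfl fun i _ => ?_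
        rw [hψconj, hψ, hres, hres']
        simp only [comp_apply, map_neg, map_mul]
        rw [← Complex.mul_conj', ← Complex.mul_conj']
        ring
    _ = ((0 : ℝ) : ℂ) := by rw [hform, neg_add_cancel, Complex.ofReal_zero]

def Interlaced {ι : Type*} [LinearOrder ι] (q p : ι → ℝ) : Prop :=
  (∀ i, q i < p i) ∧ ∀ i j, i < j → p i < q j

namespace Interlaced

variable {ι : Type*} [LinearOrder ι] {q p : ι → ℝ}

theorem lt_of_le (h : Interlaced q p) {i j : ι} (hji : j ≤ i) : q j < p i := by
  obtain rfl | hji := hji.eq_or_lt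
  · exact h.1 j
  · exact (h.1 j).trans ((h.2 j i hji).trans (h.1 i))

theorem strictMono (h : Interlaced q p) : StrictMono p :=
  fun i j hij => (h.2 i j hij).trans (h.1 j)

theorem ne (h : Interlaced q p) (i j : ι) : p i ≠ q j := by
  rcases le_or_gt j i with hji | hij
  · exact (h.lt_of_le hji).ne'
  · exact (h.2 i j hij).ne

theorem prod_div_pos [Fintype ι] (h : Interlaced q p) (i : ι) :
    0 < ∏ j ∈ univ.erase i, (q i - q j) / (q i - p j) := by
  refine prod_pos fun j hj => ?_
  rcases (ne_of_mem_erase hj).lt_or_gt with hji | hij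
  · exact div_pos (sub_pos.mpr ((h.1 j).trans (h.2 j i hji))) (sub_pos.mpr (h.2 j i hji))
  · exact div_pos_of_neg_of_neg (sub_neg.mpr ((h.1 i).trans (h.2 i j hij)))
      (sub_neg.mpr (h.lt_of_le hij.le))

end Interlaced

theorem stmt_5_general (M : ℕ) (p q : Fin M → ℝ)
    (hqp : ∀ i, q i < p i) (hpq : ∀ i j : Fin M, i < j → p i < q j)
    (d : Fin M → ℝ) (hd : ∀ i, 1 < d i)
    (r : Fin M → ℂ)
    (hr : ∀ i, ‖r i‖ ^ 2 =
      (d i ^ 2 / (p i - q i) ^ 2) *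
        ∏ j ∈ Finset.univ.erase i, ((q j - q i) * (p j - p i)) / ((p j - q i) * (q j - p i))) :
    IsUnit (Matrix.of fun i j : Fin M =>
      r i * (if i = j then 1 else 0) + 1 / ((p i : ℂ) - (q j : ℂ))) := by
  have hI : Interlaced q p := ⟨hqp, hpq⟩
  rw [Matrix.isUnit_iff_isUnit_det, isUnit_iff_ne_zero]
  intro hdet
  obtain ⟨γ, hγ, hker⟩ := Matrix.exists_mulVec_eq_zero_iff.mpr hdet
  rw [mulVec_diagonal_add_cauchy] at hker
  have hsum := sum_residue_mul_sq_norm_eq_zero hI.strictMono.injective hI.ne (congrFun hker)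
  have hweight : ∀ i, 0 < residueAtPole p q i * ‖r i‖ ^ 2 + residueAtZero p q i := fun i => by
    rw [hr, residueAtPole_mul_add_residueAtZero hI.strictMono.injective hI.ne]
    exact mul_pos (div_pos (by nlinarith [hd i]) (sub_pos.mpr (hqp i))) (hI.prod_div_pos i)
  obtain ⟨i, hi⟩ := Function.ne_iff.mp hγ
  refine ((sum_eq_zero_iff_of_nonneg fun j _ => ?_).mp hsum i (mem_univ i)).not_gt ?_
  · exact mul_nonneg (hweight j).le (sq_nonneg _)
  · exact mul_pos (hweight i) (pow_pos (norm_pos_iff.mpr hi) 2)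

theorem stmt_5 (M : ℕ) (p q : Fin M → ℝ)
    (hq0 : ∀ i, 0 < q i)
    (hqp : ∀ i, q i < p i) (hpq : ∀ i j : Fin M, i < j → p i < q j)
    (d : Fin M → ℝ) (hd : ∀ i, 1 < d i)
    (r : Fin M → ℂ)
    (hr : ∀ i, ‖r i‖ ^ 2 =
      (d i ^ 2 / (p i - q i) ^ 2) *
        ∏ j ∈ Finset.univ.erase i, ((q j - q i) * (p j - p i)) / ((p j - q i) * (q j - p i))) :
    IsUnit (Matrix.of fun i j : Fin M =>
      r i * (if i = j then 1 else 0) + 1 / ((p i : ℂ) - (q j : ℂ))) :=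
  stmt_5_general M p q hqp hpq d hd r hr
end

section
/- Let β ∈ (−1, 1), a = (1 − β²)/(1 + β²), and define f(z) = a·(1 + 2β/(e^{−iaz} − β)) for z in the closed upper half-plane. Then f is holomorphic where e^{−iaz} ≠ β, satisfies the complex ODE f'(z) = (i/2)(f(z)² − a²), and f(0) = (1+β)²/(1+β²). -/
/-! With `E = exp (-i a z)` the function is `a (E + β) / (E - β)`. Since `E' = -i a E`, both
`f'` and `(i/2)(f² - a²)` equal `2 i a² β E / (E - β)²`, and at `z = 0` we have `E = 1`. -/

open Complex

noncomputable def riccatiSolution (a β z : ℂ) : ℂ :=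
  a * (1 + 2 * β / (exp (-(I * a * z)) - β))

theorem hasDerivAt_riccatiSolution {a β z : ℂ} (hz : exp (-(I * a * z)) ≠ β) :
    HasDerivAt (riccatiSolution a β) (I / 2 * (riccatiSolution a β z ^ 2 - a ^ 2)) z := by
  have hD : exp (-(I * a * z)) - β ≠ 0 := sub_ne_zero.mpr hz
  have hE : HasDerivAt (fun w => exp (-(I * a * w)) - β) (exp (-(I * a * z)) * -(I * a)) z := by
    have hlin : HasDerivAt (fun w : ℂ => -(I * a * w)) (-(I * a)) z := by
      simpa using (hasDerivAt_id z).const_mul (-(I * a))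
    exact hlin.cexp.sub_const β
  have hf := (((hasDerivAt_const z (2 * β)).fun_div hE hD).const_add 1).const_mul a
  refine hf.congr_deriv ?_
  simp only [riccatiSolution]
  generalize exp (-(I * a * z)) = E at hD ⊢
  field_simp
  ring

theorem riccatiSolution_zero {a β : ℂ} (hβ : β ≠ 1) :
    riccatiSolution a β 0 = a * (1 + β) / (1 - β) := by
  have h : 1 - β ≠ 0 := sub_ne_zero.mpr hβ.symm
  simp only [riccatiSolution, mul_zero, neg_zero, exp_zero]
  field_simp
  ring

theorem stmt_12_general (β : ℝ) (hβ2 : β < 1)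
    (a : ℝ) (ha : a = (1 - β ^ 2) / (1 + β ^ 2))
    (f : ℂ → ℂ)
    (hf : ∀ z : ℂ, f z = (a : ℂ) *
      (1 + 2 * (β : ℂ) / (Complex.exp (-(Complex.I * a * z)) - (β : ℂ)))) :
    (∀ z : ℂ, 0 ≤ z.im → Complex.exp (-(Complex.I * a * z)) ≠ (β : ℂ) →
        DifferentiableAt ℂ f z) ∧
    (∀ z : ℂ, 0 ≤ z.im → Complex.exp (-(Complex.I * a * z)) ≠ (β : ℂ) →
        deriv f z = (Complex.I / 2) * (f z ^ 2 - (a : ℂ) ^ 2)) ∧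
    f 0 = (((1 + β) ^ 2 / (1 + β ^ 2) : ℝ) : ℂ) := by
  obtain rfl : f = riccatiSolution a β := funext hf
  refine ⟨fun z _ hz => (hasDerivAt_riccatiSolution hz).differentiableAt,
    fun z _ hz => (hasDerivAt_riccatiSolution hz).deriv, ?_⟩
  have hβ : (β : ℂ) ≠ 1 := mod_cast hβ2.ne
  have h1 : (1 : ℂ) - β ≠ 0 := sub_ne_zero.mpr hβ.symm
  have h2 : (1 : ℂ) + (β : ℂ) ^ 2 ≠ 0 := mod_cast (by positivity : (1 : ℝ) + β ^ 2 ≠ 0)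
  rw [riccatiSolution_zero hβ, ha]
  push_cast
  field_simp
  ring

theorem stmt_12 (β : ℝ) (hβ1 : -1 < β) (hβ2 : β < 1)
    (a : ℝ) (ha : a = (1 - β ^ 2) / (1 + β ^ 2))
    (f : ℂ → ℂ)
    (hf : ∀ z : ℂ, f z = (a : ℂ) *
      (1 + 2 * (β : ℂ) / (Complex.exp (-(Complex.I * a * z)) - (β : ℂ)))) :
    (∀ z : ℂ, 0 ≤ z.im → Complex.exp (-(Complex.I * a * z)) ≠ (β : ℂ) →
        DifferentiableAt ℂ f z) ∧
    (∀ z : ℂ, 0 ≤ z.im → Complex.exp (-(Complex.I * a * z)) ≠ (β : ℂ) →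
        deriv f z = (Complex.I / 2) * (f z ^ 2 - (a : ℂ) ^ 2)) ∧
    f 0 = (((1 + β) ^ 2 / (1 + β ^ 2) : ℝ) : ℂ) :=
  stmt_12_general β hβ2 a ha f hf
end
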